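/- arXiv:2201.00501 — 6 statements merged into one kernel-verified Lean document; each statement's English description precedes it below -/
import Mathlib

section
/- Let $l$ be a positive odd integer and $n$ a positive integer with $n > \sqrt{l/2}$. If $\prod_{k=1}^n (2k^2+l)$ is a perfect square and $p$ is a prime dividing $\prod_{k=1}^n (2k^2+l)$, then $p < 2n$. -/
/-!
Suppose `p ≥ 2n`. Every factor `2k² + l` is odd, so `p` is odd and hence `p > 2n`. Two factors
divisible by `p` would give `p ∣ 2(j - k)(j + k)` with `|j - k|, j + k < p`, so `p` divides exactly one factor;
as the product is a square, `p²` divides that factor. But `p² > 4n² > 2n² + l` since `l < 2n²`,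
and `2n² + l` bounds every factor.
-/

namespace Nat

theorem sq_dvd_of_isSquare_mul {p a b : ℕ} (hp : p.Prime) (hsq : IsSquare (a * b))
    (ha : p ∣ a) (hb : ¬ p ∣ b) : p ^ 2 ∣ a := by
  obtain ⟨m, hm⟩ := hsq
  have hpm : p ∣ m := (hp.dvd_mul.mp (hm ▸ dvd_mul_of_dvd_left ha b)).elim id id
  have hp2 : p ^ 2 ∣ a * b := hm ▸ pow_two p ▸ mul_dvd_mul hpm hpm
  exact (((hp.coprime_iff_not_dvd).mpr hb).pow_left 2).dvd_of_dvd_mul_right hp2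

theorem eq_of_prime_dvd_mul_sq_add {p a c j k : ℕ} (hp : p.Prime) (ha : ¬ p ∣ a)
    (hjk : j + k < p) (hj : p ∣ a * j ^ 2 + c) (hk : p ∣ a * k ^ 2 + c) : j = k := by
  wlog hkj : k ≤ j generalizing j k
  · exact (this (by omega) hk hj (by omega)).symm
  have hdiff : a * j ^ 2 + c - (a * k ^ 2 + c) = a * ((j + k) * (j - k)) := by
    rw [← Nat.sq_sub_sq, Nat.add_sub_add_right, Nat.mul_sub]
  have hdvd : p ∣ a * ((j + k) * (j - k)) := hdiff ▸ Nat.dvd_sub hj hk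
  rcases hp.dvd_mul.mp hdvd with h | h
  · exact absurd h ha
  rcases hp.dvd_mul.mp h with h | h
  · have := Nat.eq_zero_of_dvd_of_lt h hjk
    omega
  · have := Nat.eq_zero_of_dvd_of_lt h (by omega)
    omega

end Nat

theorem Finset.sq_dvd_of_isSquare_prod {ι : Type*} [DecidableEq ι] {s : Finset ι} {f : ι → ℕ}
    {p : ℕ} {i : ι} (hp : p.Prime) (hsq : IsSquare (∏ j ∈ s, f j)) (hi : i ∈ s)
    (hdvd : p ∣ f i) (huniq : ∀ j ∈ s, p ∣ f j → j = i) : p ^ 2 ∣ f i := by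
  rw [← Finset.mul_prod_erase s f hi] at hsq
  refine Nat.sq_dvd_of_isSquare_mul hp hsq hdvd fun h => ?_
  obtain ⟨j, hj, hpj⟩ := (hp.prime.dvd_finsetProd_iff _).mp h
  exact Finset.ne_of_mem_erase hj (huniq j (Finset.mem_of_mem_erase hj) hpj)

theorem stmt_0_general (l n : ℕ) (hlodd : Odd l) (hn : (n : ℝ) > Real.sqrt ((l : ℝ) / 2))
    (hsq : IsSquare (∏ k ∈ Finset.Icc 1 n, (2 * k ^ 2 + l)))
    (p : ℕ) (hp : p.Prime) (hdvd : p ∣ ∏ k ∈ Finset.Icc 1 n, (2 * k ^ 2 + l)) :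
    p < 2 * n := by
  have hl : l < 2 * n ^ 2 := by
    have := Real.lt_sq_of_sqrt_lt hn
    exact_mod_cast (by linarith : (l : ℝ) < 2 * n ^ 2)
  obtain ⟨k, hk, hpk⟩ := (hp.prime.dvd_finsetProd_iff _).mp hdvd
  have hkn := (Finset.mem_Icc.mp hk).2
  have hp2 : ¬ p ∣ 2 := by
    intro h
    rw [Nat.prime_dvd_prime_iff_eq hp Nat.prime_two] at h
    subst h
    exact Nat.not_even_iff_odd.mpr ((even_two_mul _).add_odd hlodd) (even_iff_two_dvd.mpr hpk)
  by_contra! hpn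
  have hp_gt : 2 * n < p := by
    rcases hp.eq_two_or_odd' with rfl | ⟨m, rfl⟩
    · exact absurd dvd_rfl hp2
    · omega
  have huniq : ∀ j ∈ Finset.Icc 1 n, p ∣ 2 * j ^ 2 + l → j = k := fun j hj hpj =>
    Nat.eq_of_prime_dvd_mul_sq_add hp hp2 (by have := (Finset.mem_Icc.mp hj).2; omega) hpj hpk
  have hp_sq : p ^ 2 ∣ 2 * k ^ 2 + l :=
    Finset.sq_dvd_of_isSquare_prod (f := fun j => 2 * j ^ 2 + l) hp hsq hk hpk huniq
  have := Nat.le_of_dvd (Nat.add_pos_right _ hlodd.pos) hp_sq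
  nlinarith

theorem stmt_0 (l n : ℕ) (hl : 0 < l) (hlodd : Odd l) (hn : (n : ℝ) > Real.sqrt ((l : ℝ) / 2))
    (hsq : IsSquare (∏ k ∈ Finset.Icc 1 n, (2 * k ^ 2 + l)))
    (p : ℕ) (hp : p.Prime) (hdvd : p ∣ ∏ k ∈ Finset.Icc 1 n, (2 * k ^ 2 + l)) :
    p < 2 * n :=
  stmt_0_general l n hlodd hn hsq p hp hdvd
end

section
/- For every positive integer $n$, $\sum_{n < p < 2n,\ p \text{ prime}} \log p \leq n \log 4$. -/
open Finset

theorem prod_primes_Ioo_dvd_centralBinom (n : ℕ) :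
    ∏ p ∈ (Ioo n (2 * n)).filter Nat.Prime, p ∣ n.centralBinom := by
  refine prod_primes_dvd _ (fun p hp => (mem_filter.1 hp).2.prime) fun p hp => ?_
  rw [mem_filter, mem_Ioo] at hp
  obtain ⟨⟨hnp, hp2n⟩, hp⟩ := hp
  rw [Nat.centralBinom_eq_two_mul_choose, two_mul]
  exact hp.dvd_choose_add hnp hnp (by omega)

theorem prod_primes_Ioo_le_four_pow (n : ℕ) :
    ∏ p ∈ (Ioo n (2 * n)).filter Nat.Prime, p ≤ 4 ^ n :=
  (Nat.le_of_dvd n.centralBinom_pos (prod_primes_Ioo_dvd_centralBinom n)).trans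
    n.centralBinom_le_four_pow

theorem stmt_5_general (n : ℕ) :
    ∑ p ∈ (Finset.Ioo n (2 * n)).filter Nat.Prime, Real.log p ≤ n * Real.log 4 := by
  have hpos : ∀ p ∈ (Ioo n (2 * n)).filter Nat.Prime, 0 < p := fun p hp =>
    (mem_filter.1 hp).2.pos
  calc ∑ p ∈ (Ioo n (2 * n)).filter Nat.Prime, Real.log p
      = Real.log (∏ p ∈ (Ioo n (2 * n)).filter Nat.Prime, p : ℕ) := by
        rw [Nat.cast_prod, Real.log_prod fun p hp => Nat.cast_ne_zero.2 (hpos p hp).ne']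
    _ ≤ Real.log (4 ^ n : ℕ) :=
        Real.log_le_log (Nat.cast_pos.2 (prod_pos hpos))
          (Nat.cast_le.2 (prod_primes_Ioo_le_four_pow n))
    _ = n * Real.log 4 := by rw [Nat.cast_pow, Real.log_pow, Nat.cast_ofNat]

theorem stmt_5 (n : ℕ) (hn : 0 < n) :
    ∑ p ∈ (Finset.Ioo n (2 * n)).filter Nat.Prime, Real.log p ≤ n * Real.log 4 :=
  stmt_5_general n
end

section
/- For every positive integer $n \geq 2$, $\pi(n) \leq 2(\log 4)\frac{n}{\log n} + \sqrt{n}$, where $\pi(n)$ is the number of primes at most $n$. -/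
open Finset Real

lemma pi_eq_card (n : ℕ) :
    Nat.primeCounting n = #((range (n+1)).filter Nat.Prime) := by
  rw [Nat.primeCounting, ← Nat.primesBelow_card_eq_primeCounting', Nat.primesBelow]

theorem stmt_7 (n : ℕ) (hn : 2 ≤ n) :
    (Nat.primeCounting n : ℝ) ≤ 2 * Real.log 4 * n / Real.log n + Real.sqrt n := by
  set m := Nat.sqrt n with hm
  set S := (range (n+1)).filter Nat.Prime with hS
  set T := S.filter (fun p => m < p) with hT
  set U := S.filter (fun p => ¬ m < p) with hU
  have hcard : S.card = T.card + U.card := (Finset.card_filter_add_card_filter_not _).symm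
  have hn1 : (1:ℝ) < n := by exact_mod_cast hn.trans_lt' one_lt_two
  have hlogn : 0 < Real.log n := Real.log_pos hn1
  have hnpos : (0:ℝ) < n := by linarith
  -- product of big primes divides primorial ≤ 4^n
  have hprod : ∏ p ∈ T, p ≤ 4 ^ n := by
    calc ∏ p ∈ T, p ≤ ∏ p ∈ S, p := by
          apply Finset.prod_le_prod_of_subset_of_one_le' (Finset.filter_subset _ _)
          intro p hp _
          exact (Nat.Prime.one_lt (Finset.mem_filter.mp hp).2).le
      _ = primorial n := rfl
      _ ≤ 4 ^ n := primorial_le_4_pow n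
  -- each big prime > √n
  have hsqrt_lt : ∀ p ∈ T, Real.sqrt n < p := by
    intro p hp
    have hmp : m < p := (Finset.mem_filter.mp hp).2
    have : n < (m+1)^2 := Nat.lt_succ_sqrt' n
    have h1 : (n:ℝ) < ((m+1:ℕ):ℝ)^2 := by exact_mod_cast this
    have h2 : Real.sqrt n < (m+1:ℕ) := by
      rw [show ((m+1:ℕ):ℝ)^2 = ((m+1:ℕ):ℝ) * ((m+1:ℕ):ℝ) by ring] at h1
      exact (Real.sqrt_lt' (by positivity)).mpr (by nlinarith)
    calc Real.sqrt n < ((m+1:ℕ):ℝ) := h2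
      _ ≤ p := by exact_mod_cast hmp
  -- lower bound on product
  have hsq_pos : 0 < Real.sqrt n := Real.sqrt_pos.mpr hnpos
  have hprodR : Real.sqrt n ^ T.card ≤ (4:ℝ) ^ n := by
    calc Real.sqrt n ^ T.card = ∏ _p ∈ T, Real.sqrt n := by rw [Finset.prod_const]
      _ ≤ ∏ p ∈ T, (p:ℝ) := Finset.prod_le_prod (fun p _ => hsq_pos.le)
          (fun p hp => (hsqrt_lt p hp).le)
      _ = ((∏ p ∈ T, p : ℕ) : ℝ) := by push_cast; ring
      _ ≤ ((4:ℕ) ^ n : ℝ) := by exact_mod_cast hprod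
      _ = (4:ℝ) ^ n := by push_cast; ring
  -- take logs
  have hTbound : (T.card : ℝ) ≤ 2 * Real.log 4 * n / Real.log n := by
    have hlog := Real.log_le_log (by positivity) hprodR
    rw [Real.log_pow, Real.log_sqrt hnpos.le] at hlog
    rw [Real.log_pow] at hlog
    have hlog2 : (T.card:ℝ) * (Real.log n / 2) ≤ n * Real.log 4 := by exact_mod_cast hlog
    rw [le_div_iff₀ hlogn]
    nlinarith
  -- small primes
  have hUbound : (U.card : ℝ) ≤ Real.sqrt n := by
    have h1 : U.card ≤ m := by
      have hsub : U ⊆ Finset.Icc 2 m := by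
        intro p hp
        obtain ⟨hpS, hple⟩ := Finset.mem_filter.mp hp
        have hprime := (Finset.mem_filter.mp hpS).2
        exact Finset.mem_Icc.mpr ⟨hprime.two_le, Nat.not_lt.mp hple⟩
      calc U.card ≤ (Finset.Icc 2 m).card := Finset.card_le_card hsub
        _ = m + 1 - 2 := Nat.card_Icc 2 m
        _ ≤ m := by omega
    have h2 : (m:ℝ) ≤ Real.sqrt n := by
      rw [Real.le_sqrt (by positivity)]
      · exact_mod_cast Nat.sqrt_le' n
      · exact hnpos.le
    calc (U.card : ℝ) ≤ (m:ℝ) := by exact_mod_cast h1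
      _ ≤ Real.sqrt n := h2
  rw [pi_eq_card, ← hS, hcard]
  push_cast
  linarith
end

section
/- Let $l$ be a positive odd integer and $n \geq 2$ an integer. With $\lambda = \log(2n^2+l)/\log n$, one has $\prod_{k=1}^n (2k^2+l) > (n!)^{\lambda}$. -/
/-!
Taking logarithms, the claim reads `λ · ∑ log k < ∑ log (2k² + l)` over `1 ≤ k ≤ n`, and it is
proved termwise. Since `log (2x² + c) - 2 log x = log (2 + c / x²)` is nonnegative and
decreasing in `x`, for `1 ≤ k ≤ n` one gets `log (2n² + l) · log k ≤ log n · log (2k² + l)`,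
which compares the `k`-th terms; for `k = 1` it is strict because `log 1 = 0`.
-/

open Finset Real

theorem Real.log_factorial_eq_sum_log (n : ℕ) : log (n.factorial : ℝ) = ∑ k ∈ Icc 1 n, log k := by
  rw [← Finset.Ico_add_one_right_eq_Icc, ← prod_Ico_id_eq_factorial, Nat.cast_prod, log_prod]
  intro k hk
  exact Nat.cast_ne_zero.2 (Nat.one_le_iff_ne_zero.1 (mem_Ico.1 hk).1)

theorem Real.log_two_mul_sq_add_mul_log_le {c x y : ℝ} (hc : 0 ≤ c) (hx : 1 ≤ x) (hxy : x ≤ y) :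
    log (2 * y ^ 2 + c) * log x ≤ log y * log (2 * x ^ 2 + c) := by
  have hx0 : 0 < x := by linarith
  have hy0 : 0 < y := by linarith
  have hlogx : 0 ≤ log x := log_nonneg hx
  have hlogxy : log x ≤ log y := log_le_log hx0 hxy
  have hy_le : 2 * log y ≤ log (2 * y ^ 2 + c) := by
    have h := log_le_log (by positivity) (show y ^ 2 ≤ 2 * y ^ 2 + c by nlinarith)
    rwa [log_pow, Nat.cast_ofNat] at h
  have hsub_anti : log (2 * y ^ 2 + c) - 2 * log y ≤ log (2 * x ^ 2 + c) - 2 * log x := by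
    have hmul : (2 * y ^ 2 + c) * x ^ 2 ≤ (2 * x ^ 2 + c) * y ^ 2 := by
      nlinarith [mul_le_mul_of_nonneg_left (pow_le_pow_left₀ hx0.le hxy 2) hc]
    have h := log_le_log (by positivity) hmul
    rw [log_mul (by positivity) (by positivity), log_mul (by positivity) (by positivity),
      log_pow, log_pow, Nat.cast_ofNat] at h
    linarith
  nlinarith [mul_le_mul hsub_anti hlogxy hlogx (by linarith)]

theorem Real.log_two_mul_sq_add_div_log_mul_sum_log_lt {c : ℝ} (hc : 0 ≤ c) {n : ℕ} (hn : 2 ≤ n) :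
    log (2 * n ^ 2 + c) / log n * ∑ k ∈ Icc 1 n, log (k : ℝ)
      < ∑ k ∈ Icc 1 n, log (2 * (k : ℝ) ^ 2 + c) := by
  have hlogn : 0 < log (n : ℝ) := log_pos (by exact_mod_cast hn)
  rw [mul_sum]
  apply sum_lt_sum
  · intro k hk
    obtain ⟨hk1, hkn⟩ := mem_Icc.1 hk
    rw [div_mul_eq_mul_div, div_le_iff₀ hlogn, mul_comm (log _) (log (n : ℝ))]
    exact log_two_mul_sq_add_mul_log_le hc (by exact_mod_cast hk1) (by exact_mod_cast hkn)
  · refine ⟨1, mem_Icc.2 ⟨le_rfl, by omega⟩, ?_⟩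
    rw [Nat.cast_one, log_one, mul_zero]
    exact log_pos (by linarith)

theorem stmt_9_general (l : ℕ) (n : ℕ) (hn : 2 ≤ n) :
    ((∏ k ∈ Finset.Icc 1 n, (2 * k ^ 2 + l) : ℕ) : ℝ)
      > (n.factorial : ℝ) ^ (Real.log (2 * n ^ 2 + l) / Real.log n) := by
  have hterm : ∀ k ∈ Icc 1 n, 0 < 2 * k ^ 2 + l := fun k hk => by
    have := (mem_Icc.1 hk).1
    positivity
  have hfactorial : (0 : ℝ) < n.factorial := by exact_mod_cast n.factorial_pos
  have hprod : (0 : ℝ) < ((∏ k ∈ Icc 1 n, (2 * k ^ 2 + l) : ℕ) : ℝ) := by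
    exact_mod_cast prod_pos hterm
  rw [gt_iff_lt, rpow_lt_iff_lt_log hfactorial hprod, log_factorial_eq_sum_log, Nat.cast_prod,
    log_prod fun k hk => Nat.cast_ne_zero.2 (hterm k hk).ne']
  push_cast
  exact log_two_mul_sq_add_div_log_mul_sum_log_lt l.cast_nonneg hn

theorem stmt_9 (l : ℕ) (hl : 0 < l) (hlodd : Odd l) (n : ℕ) (hn : 2 ≤ n) :
    ((∏ k ∈ Finset.Icc 1 n, (2 * k ^ 2 + l) : ℕ) : ℝ)
      > (n.factorial : ℝ) ^ (Real.log (2 * n ^ 2 + l) / Real.log n) :=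
  stmt_9_general l n hn
end

section
/- Let $p$ be an odd prime, $s$ an even positive integer, $j > s$ an integer, and $q$ a positive integer with $p \nmid 2q$. Then the congruence $2x^2 \equiv -p^s q \pmod{p^j}$ has at most $2p^{s/2}$ solutions $x \in \{0, 1, \ldots, p^j - 1\}$. -/
/-!
Write `s = 2t`. Since `p` is odd, `p^s ∣ 2x^2` forces `p^t ∣ x`, and `x = p^t y` turns the
congruence into `2y^2 ≡ -q (mod p^(j-s))`, with `y` running over `p^t` full periods of length
`p^(j-s)`. In one period there are at most two solutions, `±y`: two solutions satisfy
`p^(j-s) ∣ (y - y')(y + y')`, and `p` cannot divide both factors because it divides neither `2`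
nor `y` (as `p ∤ q`).
-/

open Finset Function

theorem Nat.count_mul_of_periodic {P : ℕ → Prop} [DecidablePred P] {a : ℕ} (hP : Periodic P a)
    (k : ℕ) : count P (k * a) = k * count P a := by
  induction k with
  | zero => simp
  | succ k ih =>
    have hshift : (fun x => P (k * a + x)) = P := funext fun x => by
      rw [add_comm]; exact hP.nat_mul k x
    rw [add_mul, one_mul, count_add, ih]
    simp only [hshift]
    ring

theorem Prime.pow_dvd_sub_or_pow_dvd_add_of_pow_dvd_sq_sub_sq {R : Type*} [CommRing R]
    [IsDomain R] {p a b : R} (hp : Prime p) (h2 : ¬ p ∣ 2) (ha : ¬ p ∣ a) {m : ℕ}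
    (h : p ^ m ∣ a ^ 2 - b ^ 2) : p ^ m ∣ a - b ∨ p ^ m ∣ a + b := by
  rw [sq_sub_sq] at h
  by_cases hsub : p ∣ a - b
  · have hadd : ¬ p ∣ a + b := fun hadd => by
      have h2a : p ∣ 2 * a := by
        convert dvd_add hsub hadd using 1; ring
      exact (hp.dvd_or_dvd h2a).elim h2 ha
    exact .inl (hp.pow_dvd_of_dvd_mul_left m hadd h)
  · exact .inr (hp.pow_dvd_of_dvd_mul_right m hsub h)

theorem eq_or_add_eq_of_pow_dvd_two_mul_sq_add {p q m z a : ℕ} (hp : p.Prime) (h2 : ¬ p ∣ 2)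
    (hq : ¬ p ∣ q) (hz : z < p ^ m) (ha : a < p ^ m)
    (hzq : p ^ m ∣ 2 * z ^ 2 + q) (haq : p ^ m ∣ 2 * a ^ 2 + q) :
    z = a ∨ z + a = p ^ m := by
  rcases Nat.eq_zero_or_pos m with rfl | hm
  · simp only [pow_zero, Nat.lt_one_iff] at hz ha
    exact .inl (hz.trans ha.symm)
  have hpz : ¬ (p : ℤ) ∣ z := fun hpz => by
    have : p ∣ 2 * z ^ 2 :=
      dvd_mul_of_dvd_right (dvd_pow (Int.natCast_dvd_natCast.mp hpz) two_ne_zero) 2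
    exact hq ((Nat.dvd_add_right this).mp ((dvd_pow_self p hm.ne').trans hzq))
  have hdiff : (p : ℤ) ^ m ∣ 2 * (z ^ 2 - a ^ 2) := by
    have := Int.natCast_dvd_natCast.mpr hzq |>.sub (Int.natCast_dvd_natCast.mpr haq)
    push_cast at this
    rwa [show (2 * z ^ 2 + q - (2 * a ^ 2 + q) : ℤ) = 2 * (z ^ 2 - a ^ 2) by ring] at this
  have hp' : Prime (p : ℤ) := Nat.prime_iff_prime_int.mp hp
  have h2' : ¬ (p : ℤ) ∣ 2 := by exact_mod_cast h2
  rcases hp'.pow_dvd_sub_or_pow_dvd_add_of_pow_dvd_sq_sub_sq h2' hpz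
    (hp'.pow_dvd_of_dvd_mul_left m h2' hdiff) with hsub | hadd
  · refine .inl ((Nat.modEq_iff_dvd.mpr ?_).eq_of_lt_of_lt hz ha)
    rw [← dvd_neg]; push_cast; rwa [neg_sub]
  · obtain ⟨c, hc⟩ : p ^ m ∣ z + a := by exact_mod_cast hadd
    have hc2 : c < 2 := by nlinarith
    interval_cases c <;> omega

theorem card_filter_pow_dvd_two_mul_sq_add_le_two {p q : ℕ} (hp : p.Prime) (h2 : ¬ p ∣ 2)
    (hq : ¬ p ∣ q) (m : ℕ) :
    #{z ∈ range (p ^ m) | p ^ m ∣ 2 * z ^ 2 + q} ≤ 2 := by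
  obtain hempty | ⟨a, ha⟩ :=
    Finset.eq_empty_or_nonempty {z ∈ range (p ^ m) | p ^ m ∣ 2 * z ^ 2 + q}
  · simp [hempty]
  rw [mem_filter, mem_range] at ha
  refine (card_le_card fun z hz => ?_).trans (card_le_two (a := a) (b := p ^ m - a))
  rw [mem_filter, mem_range] at hz
  rcases eq_or_add_eq_of_pow_dvd_two_mul_sq_add hp h2 hq hz.1 ha.1 hz.2 ha.2 with h | h <;>
    simp only [mem_insert, mem_singleton] <;> omega

theorem exists_eq_pow_mul_of_pow_dvd_two_mul_sq_add {p q t m x : ℕ} (hp : p.Prime)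
    (h2 : ¬ p ∣ 2) (hx : p ^ (2 * t + m) ∣ 2 * x ^ 2 + p ^ (2 * t) * q) :
    ∃ y, x = p ^ t * y ∧ p ^ m ∣ 2 * y ^ 2 + q := by
  have hsq : p ^ (2 * t) ∣ 2 * x ^ 2 :=
    (Nat.dvd_add_left (dvd_mul_right _ q)).mp ((pow_dvd_pow p (Nat.le_add_right _ m)).trans hx)
  have hcop : (p ^ (2 * t)).Coprime 2 := ((Nat.Prime.coprime_iff_not_dvd hp).mpr h2).pow_left _
  obtain ⟨y, rfl⟩ : p ^ t ∣ x := by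
    rw [← Nat.pow_dvd_pow_iff two_ne_zero, ← pow_mul, mul_comm t]
    exact hcop.dvd_of_dvd_mul_left hsq
  refine ⟨y, rfl, (Nat.mul_dvd_mul_iff_left (pow_pos hp.pos (2 * t))).mp ?_⟩
  convert hx using 1 <;> ring

theorem card_filter_dvd_two_mul_sq_add_range_mul (n k q : ℕ) :
    #{y ∈ range (k * n) | n ∣ 2 * y ^ 2 + q} = k * #{z ∈ range n | n ∣ 2 * z ^ 2 + q} := by
  have hperiodic : Periodic (fun y => n ∣ 2 * y ^ 2 + q) n := fun y => by
    simp only [eq_iff_iff]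
    rw [show 2 * (y + n) ^ 2 + q = 2 * y ^ 2 + q + n * (4 * y + 2 * n) by ring]
    exact Nat.dvd_add_left (dvd_mul_right n _)
  simp only [← Nat.count_eq_card_filter_range]
  exact Nat.count_mul_of_periodic hperiodic k

theorem stmt_13_general (p : ℕ) (hp : p.Prime) (s j q : ℕ) (hse : Even s)
    (hsj : s < j) (hpq : ¬ p ∣ 2 * q) :
    ((Finset.range (p ^ j)).filter (fun x => p ^ j ∣ 2 * x ^ 2 + p ^ s * q)).card
      ≤ 2 * p ^ (s / 2) := by
  have h2 : ¬ p ∣ 2 := fun h => hpq (h.mul_right q)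
  have hq : ¬ p ∣ q := fun h => hpq (h.mul_left 2)
  obtain ⟨t, rfl⟩ := hse
  obtain ⟨m, rfl⟩ := Nat.exists_eq_add_of_le hsj.le
  rw [← two_mul, Nat.mul_div_cancel_left t two_pos]
  have hsub : {x ∈ range (p ^ (2 * t + m)) | p ^ (2 * t + m) ∣ 2 * x ^ 2 + p ^ (2 * t) * q} ⊆
      {y ∈ range (p ^ t * p ^ m) | p ^ m ∣ 2 * y ^ 2 + q}.image (p ^ t * ·) := by
    intro x hx
    rw [mem_filter, mem_range] at hx
    obtain ⟨y, rfl, hy⟩ := exists_eq_pow_mul_of_pow_dvd_two_mul_sq_add hp h2 hx.2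
    refine mem_image.mpr ⟨y, mem_filter.mpr ⟨mem_range.mpr ?_, hy⟩, rfl⟩
    refine Nat.lt_of_mul_lt_mul_left (a := p ^ t) ?_
    rw [← pow_add, ← pow_add, ← add_assoc, ← two_mul]
    exact hx.1
  calc _ ≤ _ := card_le_card hsub
    _ ≤ _ := card_image_le
    _ = p ^ t * _ := card_filter_dvd_two_mul_sq_add_range_mul _ _ _
    _ ≤ p ^ t * 2 := Nat.mul_le_mul_left _ (card_filter_pow_dvd_two_mul_sq_add_le_two hp h2 hq m)
    _ = 2 * p ^ t := mul_comm _ _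

theorem stmt_13 (p : ℕ) (hp : p.Prime) (s j q : ℕ) (hs : 0 < s) (hse : Even s)
    (hsj : s < j) (hq : 0 < q) (hpq : ¬ p ∣ 2 * q) :
    ((Finset.range (p ^ j)).filter (fun x => p ^ j ∣ 2 * x ^ 2 + p ^ s * q)).card
      ≤ 2 * p ^ (s / 2) :=
  stmt_13_general p hp s j q hse hsj hpq
end

section
/- Let $l$ be a positive odd integer, $m$ a positive integer such that $p = 2m^2+l$ is prime, and suppose $m \leq n < p - m$ and $p > 2n$. Then $p$ divides $\prod_{k=1}^n (2k^2+l)$ to exactly the first power (i.e., $p \| \prod_{k=1}^n (2k^2+l)$), and hence $\prod_{k=1}^n (2k^2+l)$ is not a perfect square. -/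
/-!
The factor with `k = m` is `p` itself. Any other factor divisible by `p` would give
`2 k² ≡ 2 m² (mod p)`, hence `k ≡ ± m`, which is impossible for `k ≠ m` since `k + m < p`.
So `p` divides the product exactly once, and a square cannot have that property.
-/

theorem Nat.Prime.eq_of_dvd_two_mul_sq_add {p a b c : ℕ} (hp : p.Prime) (hp2 : p ≠ 2)
    (hab : a + b < p) (ha : p ∣ 2 * a ^ 2 + c) (hb : p ∣ 2 * b ^ 2 + c) : a = b := by
  have := Fact.mk hp
  have h2 : (2 : ZMod p) ≠ 0 := Ring.two_ne_zero (by rwa [ZMod.ringChar_zmod_n])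
  have hsq : (a : ZMod p) ^ 2 = (b : ZMod p) ^ 2 := by
    rw [← ZMod.natCast_eq_zero_iff] at ha hb
    push_cast at ha hb
    exact mul_left_cancel₀ h2 (add_right_cancel (ha.trans hb.symm))
  rcases sq_eq_sq_iff_eq_or_eq_neg.mp hsq with h | h
  · rwa [ZMod.natCast_eq_natCast_iff', Nat.mod_eq_of_lt (by omega),
      Nat.mod_eq_of_lt (by omega)] at h
  · have hsum : ((a + b : ℕ) : ZMod p) = 0 := by push_cast; rw [h, neg_add_cancel]
    rw [ZMod.natCast_eq_zero_iff] at hsum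
    have := Nat.eq_zero_of_dvd_of_lt hsum hab
    omega

theorem Prime.not_sq_dvd_prod_of_eq {α ι : Type*} [CommMonoidWithZero α] [IsCancelMulZero α]
    {p : α} (hp : Prime p) {s : Finset ι} {f : ι → α} {i : ι} (hi : i ∈ s) (hfi : f i = p)
    (hf : ∀ j ∈ s, j ≠ i → ¬ p ∣ f j) : ¬ p ^ 2 ∣ ∏ j ∈ s, f j := by
  classical
  rw [← Finset.mul_prod_erase s f hi, hfi, pow_two,
    mul_dvd_mul_iff_left hp.ne_zero, hp.dvd_finsetProd_iff]
  rintro ⟨j, hj, hdvd⟩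
  exact hf j (Finset.mem_of_mem_erase hj) (Finset.ne_of_mem_erase hj) hdvd

theorem Prime.not_isSquare_of_dvd_of_not_sq_dvd {α : Type*} [CommMonoidWithZero α] {p a : α}
    (hp : Prime p) (hdvd : p ∣ a) (hsq : ¬ p ^ 2 ∣ a) : ¬ IsSquare a := by
  rintro ⟨r, rfl⟩
  have hr : p ∣ r := (hp.dvd_mul.mp hdvd).elim id id
  exact hsq (pow_two p ▸ mul_dvd_mul hr hr)

theorem stmt_18_general (l m p n : ℕ) (hl : 0 < l) (hm : 0 < m)
    (hpeq : p = 2 * m ^ 2 + l) (hp : p.Prime) (hmn : m ≤ n) (hnp : n < p - m) :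
    (p ∣ ∏ k ∈ Finset.Icc 1 n, (2 * k ^ 2 + l)
      ∧ ¬ p ^ 2 ∣ ∏ k ∈ Finset.Icc 1 n, (2 * k ^ 2 + l))
    ∧ ¬ IsSquare (∏ k ∈ Finset.Icc 1 n, (2 * k ^ 2 + l)) := by
  have hmem : m ∈ Finset.Icc 1 n := Finset.mem_Icc.mpr ⟨hm, hmn⟩
  have hp2 : p ≠ 2 := by nlinarith
  have hdvd : p ∣ ∏ k ∈ Finset.Icc 1 n, (2 * k ^ 2 + l) :=
    hpeq ▸ Finset.dvd_prod_of_mem _ hmem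
  have hsq : ¬ p ^ 2 ∣ ∏ k ∈ Finset.Icc 1 n, (2 * k ^ 2 + l) := by
    refine Prime.not_sq_dvd_prod_of_eq hp.prime hmem hpeq.symm fun k hk hkm hk_dvd => ?_
    have hkn := (Finset.mem_Icc.mp hk).2
    exact hkm (hp.eq_of_dvd_two_mul_sq_add hp2 (by omega) hk_dvd (hpeq ▸ dvd_rfl))
  exact ⟨⟨hdvd, hsq⟩, Prime.not_isSquare_of_dvd_of_not_sq_dvd hp.prime hdvd hsq⟩

theorem stmt_18 (l m p n : ℕ) (hl : 0 < l) (hlodd : Odd l) (hm : 0 < m)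
    (hpeq : p = 2 * m ^ 2 + l) (hp : p.Prime) (hmn : m ≤ n) (hnp : n < p - m)
    (hpn : 2 * n < p) :
    (p ∣ ∏ k ∈ Finset.Icc 1 n, (2 * k ^ 2 + l)
      ∧ ¬ p ^ 2 ∣ ∏ k ∈ Finset.Icc 1 n, (2 * k ^ 2 + l))
    ∧ ¬ IsSquare (∏ k ∈ Finset.Icc 1 n, (2 * k ^ 2 + l)) :=
  stmt_18_general l m p n hl hm hpeq hp hmn hnp
end
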